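/- For each p ∈ [1,∞] and all Banach spaces X, Y, the set S_{ℓ_pⁿ} (X,Y) of operators T : X → Y that do not fix the family {ℓ_pⁿ : n ∈ ℕ} uniformly is closed under addition; together with closure under composition with arbitrary bounded operators, containing finite-rank operators, and being operator-norm closed, this makes it a closed operator ideal in the sense of Pietsch. -/

import Mathlib

/-!
Suppose `S + T` fixes the `ℓ_pⁿ` uniformly with constant `C` while `T` does not, so that `T` fixes
no `2C`-copy of some `ℓ_pᵐ`. Read a `C`-copy `R` of `ℓ_p^{mn}` for `S + T` as a copy of
`ℓ_pᵐ(ℓ_pⁿ)`. If in every block `i` the operator `S R` had norm below `1/(2Cm)` at some unit vector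
`wᵢ`, then `a ↦ R (aᵢ wᵢ)ᵢ` would be a `2C`-copy of `ℓ_pᵐ` for `T`, since `S` contributes at most
`‖a‖/(2C)` there. So `S R` is bounded below by `1/(2Cm)` on some block, which is then a
`2Cm`-copy of `ℓ_pⁿ` for `S`. The remaining ideal properties are perturbation estimates, plus the
fact that a finite-rank `T` cannot be injective on `ℓ_pⁿ` for `n > rank T`.
-/

open scoped ENNReal

/-- `T : X → Y` fixes the family `{ℓ_pⁿ : n ∈ ℕ}` uniformly: there is `C ≥ 1` such that for
each `n` there is `Rₙ : ℓ_pⁿ → X` with `‖Rₙ‖ ≤ C` and `T Rₙ` bounded below by `1/C`. -/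
def FixesLpFamilyUniformly {𝕜 : Type*} [RCLike 𝕜] (p : ℝ≥0∞) [Fact (1 ≤ p)]
    {X Y : Type*} [NormedAddCommGroup X] [NormedSpace 𝕜 X]
    [NormedAddCommGroup Y] [NormedSpace 𝕜 Y] (T : X →L[𝕜] Y) : Prop :=
  ∃ C : ℝ, 1 ≤ C ∧ ∀ n : ℕ, ∃ R : PiLp p (fun _ : Fin n => 𝕜) →L[𝕜] X,
    ‖R‖ ≤ C ∧ ∀ v : PiLp p (fun _ : Fin n => 𝕜), (1 / C) * ‖v‖ ≤ ‖T (R v)‖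

namespace PiLp

variable {p : ℝ≥0∞} {ι : Type*} [Fintype ι]

theorem norm_eq_of_forall_norm_apply_eq {β γ : ι → Type*} [∀ i, SeminormedAddCommGroup (β i)]
    [∀ i, SeminormedAddCommGroup (γ i)] {x : PiLp p β} {y : PiLp p γ}
    (h : ∀ i, ‖x i‖ = ‖y i‖) : ‖x‖ = ‖y‖ := by
  rcases p.trichotomy with rfl | rfl | hp
  · simp [norm_eq_card, h]
  · simp [norm_eq_ciSup, h]
  · simp [norm_eq_sum hp, h]

theorem sum_single [DecidableEq ι] {β : ι → Type*} [∀ i, AddCommGroup (β i)] (x : PiLp p β) :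
    ∑ i, single p i (x i) = x := by
  ext j
  simp [Finset.sum_apply, ← toLp_single]

variable {𝕜 : Type*} [NormedField 𝕜] [Fact (1 ≤ p)]

theorem norm_sum_smul_le {Y : Type*} [SeminormedAddCommGroup Y] [NormedSpace 𝕜 Y]
    (a : PiLp p fun _ : ι => 𝕜) (y : ι → Y) {ε : ℝ} (hy : ∀ i, ‖y i‖ ≤ ε) :
    ‖∑ i, a i • y i‖ ≤ Fintype.card ι * ε * ‖a‖ := by
  calc ‖∑ i, a i • y i‖ ≤ ∑ i, ‖a i • y i‖ := norm_sum_le _ _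
    _ ≤ ∑ _ : ι, ‖a‖ * ε := Finset.sum_le_sum fun i _ => by
        rw [norm_smul]
        exact mul_le_mul (norm_apply_le a i) (hy i) (norm_nonneg _) (norm_nonneg a)
    _ = Fintype.card ι * ε * ‖a‖ := by
        simp only [Finset.sum_const, Finset.card_univ, nsmul_eq_mul]
        ring

variable {β γ : ι → Type*} [∀ i, SeminormedAddCommGroup (β i)] [∀ i, NormedSpace 𝕜 (β i)]
  [∀ i, SeminormedAddCommGroup (γ i)] [∀ i, NormedSpace 𝕜 (γ i)]

variable (p 𝕜 β) in
noncomputable def singleₗᵢ [DecidableEq ι] (i : ι) : β i →ₗᵢ[𝕜] PiLp p β where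
  toLinearMap := (WithLp.linearEquiv p 𝕜 _).symm.toLinearMap ∘ₗ LinearMap.single 𝕜 β i
  norm_map' := norm_single p β i

theorem singleₗᵢ_apply [DecidableEq ι] (i : ι) (b : β i) : singleₗᵢ p 𝕜 β i b = single p i b :=
  rfl

variable (p) in
noncomputable def _root_.LinearIsometry.piLpMap (f : ∀ i, β i →ₗᵢ[𝕜] γ i) :
    PiLp p β →ₗᵢ[𝕜] PiLp p γ where
  toFun x := WithLp.toLp p fun i => f i (x i)
  map_add' x y := by ext; simp
  map_smul' c x := by ext; simp
  norm_map' x := norm_eq_of_forall_norm_apply_eq fun i => by simp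

end PiLp

section FixesCopy

variable {𝕜 : Type*} [NontriviallyNormedField 𝕜] {X Y : Type*} [NormedAddCommGroup X]
  [NormedSpace 𝕜 X] [NormedAddCommGroup Y] [NormedSpace 𝕜 Y]

def FixesCopy (C : ℝ) (T : X →L[𝕜] Y) (E : Type*) [NormedAddCommGroup E] [NormedSpace 𝕜 E] :
    Prop :=
  ∃ R : E →L[𝕜] X, ‖R‖ ≤ C ∧ ∀ v, 1 / C * ‖v‖ ≤ ‖T (R v)‖

variable {Z W E F : Type*} [NormedAddCommGroup Z] [NormedSpace 𝕜 Z] [NormedAddCommGroup W]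
  [NormedSpace 𝕜 W] [NormedAddCommGroup E] [NormedSpace 𝕜 E] [NormedAddCommGroup F]
  [NormedSpace 𝕜 F]

theorem ContinuousLinearMap.opNorm_comp_linearIsometry_le (R : F →L[𝕜] X) (J : E →ₗᵢ[𝕜] F) :
    ‖R.comp J.toContinuousLinearMap‖ ≤ ‖R‖ :=
  (R.comp _).opNorm_le_bound (norm_nonneg R) fun v => by simpa using R.le_opNorm (J v)

variable {C : ℝ} {T : X →L[𝕜] Y}

theorem FixesCopy.nonneg (h : FixesCopy C T E) : 0 ≤ C :=
  let ⟨R, hR, _⟩ := h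
  (norm_nonneg R).trans hR

theorem fixesCopy_of_subsingleton [Subsingleton E] (hC : 0 ≤ C) : FixesCopy C T E :=
  ⟨0, by simpa using hC, fun v => by simp [Subsingleton.elim v 0]⟩

theorem FixesCopy.comp_linearIsometry (h : FixesCopy C T F) (J : E →ₗᵢ[𝕜] F) :
    FixesCopy C T E := by
  obtain ⟨R, hR, hRT⟩ := h
  exact ⟨R.comp J.toContinuousLinearMap, (R.opNorm_comp_linearIsometry_le J).trans hR,
    fun v => by simpa using hRT (J v)⟩

theorem FixesCopy.of_comp_left {A : Y →L[𝕜] Z} (h : FixesCopy C (A.comp T) E) :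
    FixesCopy (C * (‖A‖ + 1)) T E := by
  have hC := h.nonneg
  obtain ⟨R, hR, hRT⟩ := h
  refine ⟨R, hR.trans (le_mul_of_one_le_right hC (by simp)), fun v => ?_⟩
  have hA : ‖A (T (R v))‖ ≤ (‖A‖ + 1) * ‖T (R v)‖ :=
    (A.le_opNorm _).trans (by gcongr; simp)
  calc 1 / (C * (‖A‖ + 1)) * ‖v‖ = (1 / C * ‖v‖) / (‖A‖ + 1) := by field_simp
    _ ≤ ‖T (R v)‖ := by
        rw [div_le_iff₀ (by positivity)]
        linarith [(hRT v).trans hA]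

theorem FixesCopy.of_comp_right {B : W →L[𝕜] X} (h : FixesCopy C (T.comp B) E) :
    FixesCopy (C * (‖B‖ + 1)) T E := by
  have hC := h.nonneg
  obtain ⟨R, hR, hRT⟩ := h
  refine ⟨B.comp R, ?_, fun v => ?_⟩
  · calc ‖B.comp R‖ ≤ ‖B‖ * ‖R‖ := B.opNorm_comp_le R
      _ ≤ (‖B‖ + 1) * C := by gcongr; simp
      _ = C * (‖B‖ + 1) := mul_comm _ _
  · calc 1 / (C * (‖B‖ + 1)) * ‖v‖ = 1 / (‖B‖ + 1) * (1 / C * ‖v‖) := by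
          rw [← one_div_mul_one_div]; ring
      _ ≤ 1 * (1 / C * ‖v‖) := by
          gcongr
          exact div_le_one_of_le₀ (by simp) (by positivity)
      _ ≤ ‖T (B (R v))‖ := by simpa using hRT v

theorem FixesCopy.of_norm_sub_le {T' : X →L[𝕜] Y} (h : FixesCopy C T E) (hC : 0 < C)
    (hT' : ‖T' - T‖ ≤ 1 / (2 * C ^ 2)) : FixesCopy (2 * C) T' E := by
  obtain ⟨R, hR, hRT⟩ := h
  refine ⟨R, by linarith, fun v => ?_⟩
  have hdiff : ‖(T' - T) (R v)‖ ≤ 1 / (2 * C) * ‖v‖ :=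
    calc ‖(T' - T) (R v)‖ ≤ ‖T' - T‖ * (‖R‖ * ‖v‖) := (T' - T).le_opNorm_of_le (R.le_opNorm v)
      _ ≤ 1 / (2 * C ^ 2) * (C * ‖v‖) := by gcongr
      _ = 1 / (2 * C) * ‖v‖ := by field_simp
  have hsplit : 1 / C * ‖v‖ = 1 / (2 * C) * ‖v‖ + 1 / (2 * C) * ‖v‖ := by ring
  have htri : ‖T (R v)‖ ≤ ‖T' (R v)‖ + ‖(T' - T) (R v)‖ := by
    simpa using norm_sub_le (T' (R v)) ((T' - T) (R v))
  linarith [hRT v]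

theorem FixesCopy.finrank_le (h : FixesCopy C T E) (hC : 0 < C)
    [FiniteDimensional 𝕜 (LinearMap.range (T : X →ₗ[𝕜] Y))] :
    Module.finrank 𝕜 E ≤ Module.finrank 𝕜 (LinearMap.range (T : X →ₗ[𝕜] Y)) := by
  obtain ⟨R, -, hRT⟩ := h
  have hinj : Function.Injective ((T : X →ₗ[𝕜] Y) ∘ₗ (R : E →ₗ[𝕜] X)) := by
    refine (injective_iff_map_eq_zero _).mpr fun v hv => norm_le_zero_iff.mp ?_
    have := hRT v
    simp only [LinearMap.coe_comp, ContinuousLinearMap.coe_coe, Function.comp_apply] at hv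
    rw [hv, norm_zero] at this
    exact nonpos_of_mul_nonpos_right this (by positivity)
  rw [← LinearMap.finrank_range_of_inj hinj]
  exact Submodule.finrank_mono (LinearMap.range_comp_le_range _ _)

end FixesCopy

section Add

variable {𝕜 : Type*} [RCLike 𝕜] {p : ℝ≥0∞} [Fact (1 ≤ p)] {ι : Type*} [Fintype ι]
  [DecidableEq ι] {X Y E : Type*} [NormedAddCommGroup X] [NormedSpace 𝕜 X]
  [NormedAddCommGroup Y] [NormedSpace 𝕜 Y] [NormedAddCommGroup E] [NormedSpace 𝕜 E]
  {C : ℝ} {S T : X →L[𝕜] Y}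

theorem fixesCopy_of_add_of_norm_single_le {R : (PiLp p fun _ : ι => E) →L[𝕜] X} (hR : ‖R‖ ≤ C)
    (hRST : ∀ v, 1 / C * ‖v‖ ≤ ‖(S + T) (R v)‖) {w : ι → E} (hw : ∀ i, ‖w i‖ = 1)
    (hSw : ∀ i, ‖S (R (PiLp.single p i (w i)))‖ ≤ 1 / (2 * C * Fintype.card ι)) :
    FixesCopy (2 * C) T (PiLp p fun _ : ι => 𝕜) := by
  have hC : 0 ≤ C := (norm_nonneg R).trans hR
  let K := LinearIsometry.piLpMap p fun i => LinearIsometry.toSpanSingleton 𝕜 E (hw i)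
  have hK : ∀ a, K a = ∑ i, a i • PiLp.single p i (w i) := fun a => by
    conv_lhs => rw [← PiLp.sum_single (K a)]
    refine Finset.sum_congr rfl fun i _ => ?_
    rw [← PiLp.singleₗᵢ_apply (𝕜 := 𝕜), ← PiLp.singleₗᵢ_apply (𝕜 := 𝕜), ← map_smul]
    rfl
  refine ⟨R.comp K.toContinuousLinearMap, (R.opNorm_comp_linearIsometry_le K).trans
    (by linarith), fun a => ?_⟩
  have hSK : ‖S (R (K a))‖ ≤ 1 / (2 * C) * ‖a‖ := by
    rw [hK, map_sum, map_sum]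
    simp only [map_smul]
    refine (PiLp.norm_sum_smul_le a _ hSw).trans ?_
    have hcard : (Fintype.card ι : ℝ) * (1 / (2 * C * Fintype.card ι)) =
        1 / (2 * C) * (Fintype.card ι / Fintype.card ι) := by ring
    rw [hcard]
    gcongr
    exact mul_le_of_le_one_right (by positivity) (div_self_le_one _)
  have htri : ‖(S + T) (R (K a))‖ ≤ ‖S (R (K a))‖ + ‖T (R (K a))‖ := norm_add_le _ _
  have hsplit : 1 / C * ‖a‖ = 1 / (2 * C) * ‖a‖ + 1 / (2 * C) * ‖a‖ := by ring
  have := hRST (K a)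
  rw [K.norm_map] at this
  simp only [ContinuousLinearMap.coe_comp, LinearIsometry.coe_toContinuousLinearMap,
    Function.comp_apply]
  linarith

theorem FixesCopy.of_add_piLp (hST : FixesCopy C (S + T) (PiLp p fun _ : ι => E))
    (hT : ¬ FixesCopy (2 * C) T (PiLp p fun _ : ι => 𝕜)) :
    FixesCopy (2 * C * Fintype.card ι) S E := by
  have hC := hST.nonneg
  obtain ⟨R, hR, hRST⟩ := hST
  suffices ∃ i, ∀ v, 1 / (2 * C * Fintype.card ι) * ‖v‖ ≤ ‖S (R (PiLp.single p i v))‖ by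
    obtain ⟨i, hi⟩ := this
    have hcard : (1 : ℝ) ≤ Fintype.card ι := by exact_mod_cast Fintype.card_pos_iff.mpr ⟨i⟩
    let J := PiLp.singleₗᵢ p 𝕜 (fun _ : ι => E) i
    exact ⟨R.comp J.toContinuousLinearMap,
      (R.opNorm_comp_linearIsometry_le J).trans (by nlinarith), hi⟩
  by_contra! hsmall
  choose x hx using hsmall
  have hx0 : ∀ i, x i ≠ 0 := fun i h => by
    simpa [h, ← PiLp.singleₗᵢ_apply (𝕜 := 𝕜)] using hx i
  refine hT (fixesCopy_of_add_of_norm_single_le hR hRST (w := fun i => (‖x i‖⁻¹ : 𝕜) • x i)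
    (fun i => norm_smul_inv_norm (hx0 i)) fun i => ?_)
  have hxi := (hx i).le
  rw [← PiLp.singleₗᵢ_apply (𝕜 := 𝕜)] at hxi ⊢
  rw [map_smul, map_smul, map_smul, norm_smul, norm_inv, RCLike.norm_ofReal, abs_norm,
    inv_mul_le_iff₀ (norm_pos_iff.mpr (hx0 i))]
  linarith

end Add

section FixesLpFamilyUniformly

variable {𝕜 : Type*} [RCLike 𝕜] {p : ℝ≥0∞} [Fact (1 ≤ p)] {X Y : Type*}
  [NormedAddCommGroup X] [NormedSpace 𝕜 X] [NormedAddCommGroup Y] [NormedSpace 𝕜 Y]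

theorem fixesLpFamilyUniformly_iff {T : X →L[𝕜] Y} : FixesLpFamilyUniformly p T ↔
    ∃ C, 1 ≤ C ∧ ∀ n, FixesCopy C T (PiLp p fun _ : Fin n => 𝕜) :=
  Iff.rfl

theorem FixesLpFamilyUniformly.of_add {S T : X →L[𝕜] Y} (hST : FixesLpFamilyUniformly p (S + T))
    (hT : ¬ FixesLpFamilyUniformly p T) : FixesLpFamilyUniformly p S := by
  obtain ⟨C, hC, hfix⟩ := fixesLpFamilyUniformly_iff.mp hST
  obtain ⟨m, hm⟩ : ∃ m, ¬ FixesCopy (2 * C) T (PiLp p fun _ : Fin m => 𝕜) := by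
    by_contra! h
    exact hT (fixesLpFamilyUniformly_iff.mpr ⟨2 * C, by linarith, h⟩)
  have hm1 : (1 : ℝ) ≤ m := by
    rcases Nat.eq_zero_or_pos m with rfl | hm0
    · exact absurd (fixesCopy_of_subsingleton (by linarith)) hm
    · exact_mod_cast hm0
  refine fixesLpFamilyUniformly_iff.mpr ⟨2 * C * m, by nlinarith, fun n => ?_⟩
  let e : (Σ _ : Fin m, Fin n) ≃ Fin (m * n) := (Equiv.sigmaEquivProd _ _).trans finProdFinEquiv
  let blocks : (PiLp p fun _ : Fin m => PiLp p fun _ : Fin n => 𝕜) ≃ₗᵢ[𝕜]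
      PiLp p fun _ : Fin (m * n) => 𝕜 :=
    (LinearIsometryEquiv.piLpCurry 𝕜 p _).symm.trans (LinearIsometryEquiv.piLpCongrLeft p 𝕜 𝕜 e)
  simpa using ((hfix (m * n)).comp_linearIsometry blocks.toLinearIsometry).of_add_piLp hm

theorem FixesLpFamilyUniformly.of_comp {W Z : Type*} [NormedAddCommGroup W] [NormedSpace 𝕜 W]
    [NormedAddCommGroup Z] [NormedSpace 𝕜 Z] {T : X →L[𝕜] Y} {A : Y →L[𝕜] Z} {B : W →L[𝕜] X}
    (h : FixesLpFamilyUniformly p ((A.comp T).comp B)) : FixesLpFamilyUniformly p T := by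
  obtain ⟨C, hC, hfix⟩ := fixesLpFamilyUniformly_iff.mp h
  have hA : 1 ≤ ‖A‖ + 1 := le_add_of_nonneg_left (norm_nonneg A)
  have hB : 1 ≤ ‖B‖ + 1 := le_add_of_nonneg_left (norm_nonneg B)
  exact ⟨C * (‖B‖ + 1) * (‖A‖ + 1),
    one_le_mul_of_one_le_of_one_le (one_le_mul_of_one_le_of_one_le hC hB) hA,
    fun n => (hfix n).of_comp_right.of_comp_left⟩

theorem not_fixesLpFamilyUniformly_of_finiteDimensional_range (T : X →L[𝕜] Y)
    [FiniteDimensional 𝕜 (LinearMap.range (T : X →ₗ[𝕜] Y))] : ¬ FixesLpFamilyUniformly p T := by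
  intro hT
  obtain ⟨C, hC, hfix⟩ := fixesLpFamilyUniformly_iff.mp hT
  have hdim := (hfix (Module.finrank 𝕜 (LinearMap.range (T : X →ₗ[𝕜] Y)) + 1)).finrank_le
    (by linarith)
  rw [(WithLp.linearEquiv p 𝕜 _).finrank_eq, Module.finrank_fin_fun] at hdim
  omega

theorem isOpen_setOf_fixesLpFamilyUniformly :
    IsOpen {T : X →L[𝕜] Y | FixesLpFamilyUniformly p T} := by
  refine Metric.isOpen_iff.mpr fun T hT => ?_
  obtain ⟨C, hC, hfix⟩ := fixesLpFamilyUniformly_iff.mp hT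
  refine ⟨1 / (2 * C ^ 2), by positivity, fun T' hT' => fixesLpFamilyUniformly_iff.mpr
    ⟨2 * C, by linarith, fun n => (hfix n).of_norm_sub_le (by linarith) ?_⟩⟩
  rw [Metric.mem_ball, dist_eq_norm] at hT'
  exact hT'.le

end FixesLpFamilyUniformly

/-- For each `p ∈ [1,∞]` and all Banach spaces `X`, `Y`, the set of
operators `X → Y` not fixing the family `{ℓ_pⁿ : n ∈ ℕ}` uniformly is closed under
addition; moreover it is closed under composition with arbitrary bounded operators,
contains the finite-rank operators, and is operator-norm closed — so the class
`S_{ℓ_pⁿ}` is a closed operator ideal in the sense of Pietsch. -/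
theorem lp_family_singular_ideal {𝕜 : Type*} [RCLike 𝕜]
    (p : ℝ≥0∞) [Fact (1 ≤ p)] :
    ∀ (X Y : Type*) [NormedAddCommGroup X] [NormedSpace 𝕜 X] [CompleteSpace X]
      [NormedAddCommGroup Y] [NormedSpace 𝕜 Y] [CompleteSpace Y],
      (∀ S T : X →L[𝕜] Y, ¬ FixesLpFamilyUniformly (𝕜 := 𝕜) p S →
        ¬ FixesLpFamilyUniformly (𝕜 := 𝕜) p T →
        ¬ FixesLpFamilyUniformly (𝕜 := 𝕜) p (S + T)) ∧
      (∀ (W Z : Type*) [NormedAddCommGroup W] [NormedSpace 𝕜 W] [CompleteSpace W]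
        [NormedAddCommGroup Z] [NormedSpace 𝕜 Z] [CompleteSpace Z]
        (T : X →L[𝕜] Y) (A : Y →L[𝕜] Z) (B : W →L[𝕜] X),
          ¬ FixesLpFamilyUniformly (𝕜 := 𝕜) p T →
            ¬ FixesLpFamilyUniformly (𝕜 := 𝕜) p ((A.comp T).comp B)) ∧
      (∀ T : X →L[𝕜] Y, FiniteDimensional 𝕜 (LinearMap.range (T : X →ₗ[𝕜] Y)) →
        ¬ FixesLpFamilyUniformly (𝕜 := 𝕜) p T) ∧
      IsClosed {T : X →L[𝕜] Y | ¬ FixesLpFamilyUniformly (𝕜 := 𝕜) p T} := by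
  intro X Y _ _ _ _ _ _
  refine ⟨fun S T hS hT hST => hS (hST.of_add hT), fun W Z _ _ _ _ _ _ T A B hT h => hT h.of_comp,
    fun T _ => not_fixesLpFamilyUniformly_of_finiteDimensional_range T, ?_⟩
  exact isOpen_setOf_fixesLpFamilyUniformly.isClosed_compl
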